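/- If M is a finitely generated G_C-projective R-module, then the natural biduality map M → Hom_R(Hom_R(M, C), C) is an isomorphism. -/

import Mathlib

open TensorProduct CategoryTheory

universe u

section Preamble

variable (R : Type u) [CommRing R]

/-- `C` is a semidualizing `R`-module: finitely presented, the homothety map
`R → Hom_R(C,C)` is bijective, and `Ext^i_R(C,C) = 0` for all `i ≥ 1`. -/
def IsSemidualizing (C : Type u) [AddCommGroup C] [Module R C] : Prop :=
  Module.FinitePresentation R C ∧
  Function.Bijective (LinearMap.lsmul R C) ∧
  ∀ i : ℕ, 0 < i →
    Subsingleton (((Ext R (ModuleCat.{u} R) i).obj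
      (Opposite.op (ModuleCat.of R C))).obj (ModuleCat.of R C))

/-- A ring is coherent if every finitely generated ideal is finitely presented. -/
def IsCoherentRing : Prop :=
  ∀ I : Ideal R, I.FG → Module.FinitePresentation R I

variable (C : Type u) [AddCommGroup C] [Module R C]

/-- `M` is `G_C`-projective: it is the image `im(P₀ → C ⊗ P₋₁)` in an exact complex
`⋯ → P₁ → P₀ → C ⊗ P₋₁ → C ⊗ P₋₂ → ⋯` with all `Pᵢ` projective which stays exact
under `Hom_R(-, C ⊗ Q)` for every projective `Q`. -/
def IsGCProjective (M : Type u) [AddCommGroup M] [Module R M] : Prop :=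
  ∃ (X : ℤ → ModuleCat.{u} R) (d : ∀ n : ℤ, X (n + 1) →ₗ[R] X n),
    (∀ n : ℤ, Function.Exact (d (n + 1)) (d n)) ∧
    (∀ n : ℤ, 0 ≤ n → Module.Projective R (X n)) ∧
    (∀ n : ℤ, n < 0 → ∃ P : ModuleCat.{u} R, Module.Projective R P ∧
      Nonempty (X n ≃ₗ[R] C ⊗[R] P)) ∧
    Nonempty (M ≃ₗ[R] LinearMap.range (d (-1))) ∧
    (∀ Q : ModuleCat.{u} R, Module.Projective R Q → ∀ n : ℤ,
      Function.Exact (LinearMap.lcomp R (C ⊗[R] Q) (d n))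
        (LinearMap.lcomp R (C ⊗[R] Q) (d (n + 1))))

/-- `M` is `G_C`-injective: dual to `G_C`-projective, via an exact complex
`⋯ → Hom(C,I₁) → Hom(C,I₀) → I₋₁ → ⋯` with all `Iⱼ` injective which stays exact
under `Hom_R(Hom_R(C,I), -)` for every injective `I`. -/
def IsGCInjective (M : Type u) [AddCommGroup M] [Module R M] : Prop :=
  ∃ (X : ℤ → ModuleCat.{u} R) (d : ∀ n : ℤ, X (n + 1) →ₗ[R] X n),
    (∀ n : ℤ, Function.Exact (d (n + 1)) (d n)) ∧
    (∀ n : ℤ, n < 0 → Module.Injective R (X n)) ∧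
    (∀ n : ℤ, 0 ≤ n → ∃ I : ModuleCat.{u} R, Module.Injective R I ∧
      Nonempty (X n ≃ₗ[R] (C →ₗ[R] I))) ∧
    Nonempty (M ≃ₗ[R] LinearMap.range (d (-1))) ∧
    (∀ I : ModuleCat.{u} R, Module.Injective R I → ∀ n : ℤ,
      Function.Exact (LinearMap.llcomp (R := R) (σ₁₂ := RingHom.id R) (σ₁₃ := RingHom.id R) R (C →ₗ[R] I) (X (n + 1 + 1)) (X (n + 1)) (d (n + 1)))
        (LinearMap.llcomp (R := R) (σ₁₂ := RingHom.id R) (σ₁₃ := RingHom.id R) R (C →ₗ[R] I) (X (n + 1)) (X n) (d n)))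

/-- `M` is `G_C`-flat: it is the image `im(F₀ → C ⊗ F₋₁)` in an exact complex
`⋯ → F₁ → F₀ → C ⊗ F₋₁ → ⋯` with all `Fᵢ` flat which stays exact under
`Hom_R(C, I) ⊗_R -` for every injective `I`. -/
def IsGCFlat (M : Type u) [AddCommGroup M] [Module R M] : Prop :=
  ∃ (X : ℤ → ModuleCat.{u} R) (d : ∀ n : ℤ, X (n + 1) →ₗ[R] X n),
    (∀ n : ℤ, Function.Exact (d (n + 1)) (d n)) ∧
    (∀ n : ℤ, 0 ≤ n → Module.Flat R (X n)) ∧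
    (∀ n : ℤ, n < 0 → ∃ F : ModuleCat.{u} R, Module.Flat R F ∧
      Nonempty (X n ≃ₗ[R] C ⊗[R] F)) ∧
    Nonempty (M ≃ₗ[R] LinearMap.range (d (-1))) ∧
    (∀ I : ModuleCat.{u} R, Module.Injective R I → ∀ n : ℤ,
      Function.Exact (LinearMap.lTensor (C →ₗ[R] I) (d (n + 1)))
        (LinearMap.lTensor (C →ₗ[R] I) (d n)))

/-- `K` is an `n`-th syzygy of `M` in some resolution
`0 → K → G_{n-1} → ⋯ → G₀ → M → 0` whose terms `Gᵢ` all satisfy `P`. -/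
def IsSyzygyWith (P : ModuleCat.{u} R → Prop) :
    ℕ → ModuleCat.{u} R → ModuleCat.{u} R → Prop
  | 0, K, M => Nonempty (K ≃ₗ[R] M)
  | n + 1, K, M => ∃ (G : ModuleCat.{u} R) (f : G →ₗ[R] M), P G ∧
      Function.Surjective f ∧
      IsSyzygyWith P n K (ModuleCat.of R (LinearMap.ker f))

/-- `G_C`-flat dimension of `M` is at most `n`: there is an exact sequence
`0 → G_n → ⋯ → G₀ → M → 0` with all `Gᵢ` `G_C`-flat. -/
def GCFlatDimLE (M : ModuleCat.{u} R) (n : ℕ) : Prop :=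
  ∃ K : ModuleCat.{u} R, IsGCFlat R C K ∧
    IsSyzygyWith R (fun G => IsGCFlat R C G) n K M

/-- `R` is `G_C`-semihereditary: coherent, and every submodule of a flat module
is `G_C`-flat. -/
def IsGCSemihereditary : Prop :=
  IsCoherentRing R ∧
  ∀ F : ModuleCat.{u} R, Module.Flat R F →
    ∀ N : Submodule R F, IsGCFlat R C N

/-- The FP-injective dimension of `M` is at most `n`:
`Ext^{n+1}_R(N, M) = 0` for every finitely presented module `N`. -/
def FPInjDimLE (M : Type u) [AddCommGroup M] [Module R M] (n : ℕ) : Prop :=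
  ∀ N : ModuleCat.{u} R, Module.FinitePresentation R N →
    Subsingleton (((Ext R (ModuleCat.{u} R) (n + 1)).obj
      (Opposite.op N)).obj (ModuleCat.of R M))

/-- The flat dimension of `M` is at most `n`. -/
def FlatDimLE (M : Type u) [AddCommGroup M] [Module R M] (n : ℕ) : Prop :=
  ∃ K : ModuleCat.{u} R, Module.Flat R K ∧
    IsSyzygyWith R (fun G => Module.Flat R G) n K (ModuleCat.of R M)

/-- The injective dimension of `M` is at most `n`:
`Ext^i_R(N, M) = 0` for all `i > n` and all modules `N`. -/
def InjDimLE (M : Type u) [AddCommGroup M] [Module R M] (n : ℕ) : Prop :=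
  ∀ i : ℕ, n < i → ∀ N : ModuleCat.{u} R,
    Subsingleton (((Ext R (ModuleCat.{u} R) i).obj
      (Opposite.op N)).obj (ModuleCat.of R M))

end Preamble

/-- `M` is Gorenstein projective: it is an image in an exact complex of projective
modules `⋯ → P₁ → P₀ → P₋₁ → ⋯` which stays exact under `Hom_R(-, Q)` for every
projective `Q`. -/
def IsGorensteinProjective (R : Type u) [CommRing R]
    (M : Type u) [AddCommGroup M] [Module R M] : Prop :=
  ∃ (X : ℤ → ModuleCat.{u} R) (d : ∀ n : ℤ, X (n + 1) →ₗ[R] X n),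
    (∀ n : ℤ, Function.Exact (d (n + 1)) (d n)) ∧
    (∀ n : ℤ, Module.Projective R (X n)) ∧
    Nonempty (M ≃ₗ[R] LinearMap.range (d (-1))) ∧
    (∀ Q : ModuleCat.{u} R, Module.Projective R Q → ∀ n : ℤ,
      Function.Exact (LinearMap.lcomp R Q (d n)) (LinearMap.lcomp R Q (d (n + 1))))


/-! A `G_C`-projective `M` sits in an exact sequence `0 → M → C ⊗ P → C ⊗ P'` with `P, P'`
projective, along which every map `M → C` extends (`Hom(-, C ⊗ Q)`-exactness for `Q = R`).
A module `C ⊗ P` is a retract of `C^(P)`, so maps to `C` separate its points; this gives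
injectivity. For surjectivity, finite generation makes `M → C ⊗ P` factor through a finite
sum `Cⁿ`, which is `C`-reflexive because `R → Hom(C, C)` is onto; hence a functional `Φ` on
`Hom(M, C)` is evaluation at some `y ∈ C ⊗ P`. Every map `C ⊗ P' → C` kills the image of `y`
in `C ⊗ P'`, so that image is zero and `y` comes from `M`. -/
section CDuality

open LinearMap

variable {R : Type*} [CommRing R] {C : Type*} [AddCommGroup C] [Module R C]
  {M N Y Z : Type*} [AddCommGroup M] [Module R M] [AddCommGroup N] [Module R N]
  [AddCommGroup Y] [Module R Y] [AddCommGroup Z] [Module R Z]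

variable (R C) in
def IsCTorsionless (M : Type*) [AddCommGroup M] [Module R M] : Prop :=
  ∀ m : M, (∀ f : M →ₗ[R] C, f m = 0) → m = 0

theorem IsCTorsionless.of_injective {f : M →ₗ[R] N} (hf : Function.Injective f)
    (hN : IsCTorsionless R C N) : IsCTorsionless R C M :=
  fun m hm => hf <| by rw [map_zero]; exact hN _ fun g => hm (g ∘ₗ f)

theorem IsCTorsionless.applyₗ_injective (hM : IsCTorsionless R C M) :
    Function.Injective (applyₗ : M →ₗ[R] (M →ₗ[R] C) →ₗ[R] C) :=
  (injective_iff_map_eq_zero _).mpr fun m hm => hM m fun f => congr($hm f)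

theorem isCTorsionless_finsupp (I : Type*) : IsCTorsionless R C (I →₀ C) :=
  fun _ hz => Finsupp.ext fun i => hz (Finsupp.lapply i)

theorem exists_retraction_finsupp_of_equiv_tensor {P : Type*} [AddCommGroup P] [Module R P]
    [Module.Projective R P] (e : Y ≃ₗ[R] C ⊗[R] P) :
    ∃ (E : Y →ₗ[R] P →₀ C) (Pr : (P →₀ C) →ₗ[R] Y), Pr ∘ₗ E = LinearMap.id := by
  classical
  obtain ⟨s, hs⟩ := Module.projective_def'.mp ‹Module.Projective R P›
  let σ := TensorProduct.finsuppScalarRight R R C P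
  refine ⟨σ.toLinearMap ∘ₗ s.lTensor C ∘ₗ e.toLinearMap,
    e.symm.toLinearMap ∘ₗ (Finsupp.linearCombination R id).lTensor C ∘ₗ σ.symm.toLinearMap, ?_⟩
  ext y
  simp only [LinearMap.comp_apply, LinearEquiv.coe_coe, LinearEquiv.symm_apply_apply,
    ← lTensor_comp_apply, hs, lTensor_id, LinearMap.id_apply]

theorem isCTorsionless_of_equiv_tensor {P : Type*} [AddCommGroup P] [Module R P]
    [Module.Projective R P] (e : Y ≃ₗ[R] C ⊗[R] P) : IsCTorsionless R C Y := by
  obtain ⟨E, Pr, h⟩ := exists_retraction_finsupp_of_equiv_tensor e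
  exact (isCTorsionless_finsupp P).of_injective
    (Function.LeftInverse.injective (g := Pr) fun y => congr($h y))

theorem exists_comp_eq_pi_of_finite [Module.Finite R M] {I : Type*} (φ : M →ₗ[R] I →₀ C) :
    ∃ (n : ℕ) (α : M →ₗ[R] Fin n → C) (u : (Fin n → C) →ₗ[R] I →₀ C), u ∘ₗ α = φ := by
  classical
  obtain ⟨S, hS⟩ := Module.Finite.fg_top (R := R) (M := M)
  let J : Finset I := S.biUnion fun m => (φ m).support
  have hJ : range φ ≤ Finsupp.supported C R (J : Set I) := by
    rw [range_eq_map, ← hS, Submodule.map_span_le]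
    exact fun m hm => (Finsupp.mem_supported _ _).mpr
      (Finset.coe_subset.mpr (Finset.subset_biUnion_of_mem (fun m => (φ m).support) hm))
  let e := (Finsupp.supportedEquivFinsupp (M := C) (R := R) (J : Set I)).trans
    ((Finsupp.linearEquivFunOnFinite R C _).trans
      (LinearEquiv.funCongrLeft R C (Fintype.equivFin (J : Set I)).symm))
  refine ⟨_, e.toLinearMap ∘ₗ φ.codRestrict _ fun m => hJ ⟨m, rfl⟩,
    (Finsupp.supported C R _).subtype ∘ₗ e.symm.toLinearMap, ?_⟩
  ext m : 1
  simp

theorem applyₗ_surjective_pi (hC : Function.Surjective (lsmul R C)) (J : Type*) [Fintype J]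
    [DecidableEq J] : Function.Surjective (applyₗ : (J → C) →ₗ[R] ((J → C) →ₗ[R] C) →ₗ[R] C) := by
  intro Ψ
  choose r hr using fun (g : (J → C) →ₗ[R] C) (j : J) => hC (g ∘ₗ single R (fun _ => C) j)
  have hg : ∀ g, g = ∑ j, r g j • proj j := fun g => pi_ext' fun j => by
    ext c
    simp [← hr g j, Pi.single_apply]
  refine ⟨fun j => Ψ (proj j), ext fun g => ?_⟩
  conv_rhs => rw [hg g]
  conv_lhs => rw [applyₗ_apply_apply, hg g]
  simp

theorem exists_forall_apply_eq_of_comp_eq (α : M →ₗ[R] N) (u : N →ₗ[R] Y)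
    (hN : Function.Surjective (applyₗ : N →ₗ[R] (N →ₗ[R] C) →ₗ[R] C))
    (Φ : (M →ₗ[R] C) →ₗ[R] C) : ∃ y : Y, ∀ g : Y →ₗ[R] C, g y = Φ (g ∘ₗ u ∘ₗ α) := by
  obtain ⟨z, hz⟩ := hN (Φ ∘ₗ lcomp R C α)
  exact ⟨u z, fun g => congr($hz (g ∘ₗ u))⟩

theorem exists_forall_apply_eq_of_retraction (hC : Function.Surjective (lsmul R C))
    [Module.Finite R M] {I : Type*} {E : Y →ₗ[R] I →₀ C} {Pr : (I →₀ C) →ₗ[R] Y}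
    (hPr : Pr ∘ₗ E = LinearMap.id) (ι : M →ₗ[R] Y) (Φ : (M →ₗ[R] C) →ₗ[R] C) :
    ∃ y : Y, ∀ g : Y →ₗ[R] C, g y = Φ (g ∘ₗ ι) := by
  classical
  obtain ⟨n, α, u, hu⟩ := exists_comp_eq_pi_of_finite (E ∘ₗ ι)
  obtain ⟨y, hy⟩ := exists_forall_apply_eq_of_comp_eq α (Pr ∘ₗ u) (applyₗ_surjective_pi hC _) Φ
  refine ⟨y, fun g => ?_⟩
  rw [hy, comp_assoc, hu, ← comp_assoc ι E Pr, hPr, id_comp]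

theorem applyₗ_surjective_of_exact {ι : M →ₗ[R] Y} {δ : Y →ₗ[R] Z} (hιδ : Function.Exact ι δ)
    (hZ : IsCTorsionless R C Z) (hext : ∀ f : M →ₗ[R] C, ∃ g : Y →ₗ[R] C, g ∘ₗ ι = f)
    (heval : ∀ Φ : (M →ₗ[R] C) →ₗ[R] C, ∃ y : Y, ∀ g : Y →ₗ[R] C, g y = Φ (g ∘ₗ ι)) :
    Function.Surjective (applyₗ : M →ₗ[R] (M →ₗ[R] C) →ₗ[R] C) := by
  intro Φ
  obtain ⟨y, hy⟩ := heval Φ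
  have hδy : δ y = 0 := hZ _ fun χ => by
    rw [← LinearMap.comp_apply, hy, comp_assoc, hιδ.linearMap_comp_eq_zero, comp_zero, map_zero]
  obtain ⟨m, rfl⟩ := (hιδ y).mp hδy
  refine ⟨m, ext fun f => ?_⟩
  obtain ⟨g, rfl⟩ := hext f
  exact hy g

theorem exists_comp_subtype_eq_of_exact_lcomp {A A' B T : Type*} [AddCommGroup A] [Module R A]
    [AddCommGroup A'] [Module R A'] [AddCommGroup B] [Module R B] [AddCommGroup T] [Module R T]
    {q : A' →ₗ[R] A} {p : A →ₗ[R] B} (hpq : p ∘ₗ q = 0)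
    (h : Function.Exact (lcomp R T p) (lcomp R T q)) (f : range p →ₗ[R] T) :
    ∃ g : B →ₗ[R] T, g ∘ₗ (range p).subtype = f := by
  have hf : lcomp R T q (f ∘ₗ p.rangeRestrict) = 0 := by
    ext x
    have hx : p.rangeRestrict (q x) = 0 := Subtype.ext congr($hpq x)
    simp [hx]
  obtain ⟨g, hg⟩ := (h _).mp hf
  exact ⟨g, ext fun ⟨_, x, rfl⟩ => congr($hg x)⟩

end CDuality

theorem IsGCProjective.exists_exact_tensor {R : Type u} [CommRing R] {C : Type u}
    [AddCommGroup C] [Module R C] {M : Type u} [AddCommGroup M] [Module R M]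
    (hM : IsGCProjective R C M) :
    ∃ (Y Z : ModuleCat.{u} R) (ι : M →ₗ[R] Y) (δ : Y →ₗ[R] Z),
      Function.Injective ι ∧ Function.Exact ι δ ∧
      (∃ P : ModuleCat.{u} R, Module.Projective R P ∧ Nonempty (Y ≃ₗ[R] C ⊗[R] P)) ∧
      (∃ P : ModuleCat.{u} R, Module.Projective R P ∧ Nonempty (Z ≃ₗ[R] C ⊗[R] P)) ∧
      ∀ f : M →ₗ[R] C, ∃ g : Y →ₗ[R] C, g ∘ₗ ι = f := by
  obtain ⟨X, d, hd, -, hneg, ⟨ε⟩, hHom⟩ := hM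
  -- `X (-2 + 1)`, not `X (-1)`: the elaborator does not evaluate `-2 + 1` when checking `d (-2)`
  refine ⟨X (-2 + 1), X (-2), (LinearMap.range (d (-1))).subtype ∘ₗ ε.toLinearMap, d (-2),
    Subtype.val_injective.comp ε.injective, fun y => (hd (-2) y).trans ?_,
    hneg (-2 + 1) (by norm_num), hneg (-2) (by norm_num), fun f => ?_⟩
  · exact ⟨fun ⟨x, hx⟩ => ⟨ε.symm ⟨y, x, hx⟩, by simp⟩, fun ⟨m, hm⟩ => hm ▸ (ε m).2⟩
  · obtain ⟨g, hg⟩ := exists_comp_subtype_eq_of_exact_lcomp (hd (-1)).linearMap_comp_eq_zero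
      (hHom (ModuleCat.of R R) (inferInstanceAs (Module.Projective R R)) (-1))
      ((TensorProduct.rid R C).symm.toLinearMap ∘ₗ f ∘ₗ ε.symm.toLinearMap)
    refine ⟨(TensorProduct.rid R C).toLinearMap ∘ₗ g, ?_⟩
    rw [LinearMap.comp_assoc, ← LinearMap.comp_assoc _ _ g, hg]
    ext m
    simp

/-- for a finitely generated `G_C`-projective `M`, the natural
biduality map `M → Hom_R(Hom_R(M, C), C)`, `m ↦ (f ↦ f m)`, is an isomorphism. -/
theorem gcProjective_biduality
    (R : Type u) [CommRing R] (C : Type u) [AddCommGroup C] [Module R C] (hC : IsSemidualizing R C)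
    (M : Type u) [AddCommGroup M] [Module R M]
    (hfg : Module.Finite R M) (hM : IsGCProjective R C M) :
    Function.Bijective ((LinearMap.id (R := R) (M := M →ₗ[R] C)).flip) := by
  obtain ⟨-, hhom, -⟩ := hC
  obtain ⟨Y, Z, ι, δ, hι, hιδ, ⟨P, hP, ⟨eY⟩⟩, ⟨P', hP', ⟨eZ⟩⟩, hext⟩ := hM.exists_exact_tensor
  obtain ⟨E, Pr, hPr⟩ := exists_retraction_finsupp_of_equiv_tensor eY
  exact ⟨((isCTorsionless_of_equiv_tensor eY).of_injective hι).applyₗ_injective,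
    applyₗ_surjective_of_exact hιδ (isCTorsionless_of_equiv_tensor eZ) hext
      (exists_forall_apply_eq_of_retraction hhom.2 hPr ι)⟩
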